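/- arXiv:1903.07927 — 3 statements merged into one kernel-verified Lean document; each statement's English description precedes it below -/
import Mathlib

section
/- Let V be a finite-dimensional real vector space with a norm |·| and let m be a positive integer. Then there exists a positive constant C (depending only on V and m) such that for all x, y ∈ V, ∫₀¹ |x + t y|^m dt ≥ C |y|^m. -/
/-!
On some quarter of `[0, 1]` the integrand is bounded below by `(‖y‖ / 4) ^ m`: if `‖x‖ ≤ ‖y‖ / 2`
then `‖x + t • y‖ ≥ t ‖y‖ - ‖x‖ ≥ ‖y‖ / 4` for `t ∈ [3/4, 1]`, and otherwise
`‖x + t • y‖ ≥ ‖x‖ - t ‖y‖ ≥ ‖y‖ / 4` for `t ∈ [0, 1/4]`. Hence `C = (1/4) ^ (m + 1)` works.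
-/

open MeasureTheory Set

theorem mul_le_intervalIntegral_of_le_on_Icc {f : ℝ → ℝ} {a b c d k : ℝ}
    (hca : c ≤ a) (hab : a ≤ b) (hbd : b ≤ d) (hf_nonneg : ∀ t, 0 ≤ f t)
    (hf : IntervalIntegrable f volume c d) (hk : ∀ t ∈ Icc a b, k ≤ f t) :
    (b - a) * k ≤ ∫ t in c..d, f t :=
  calc (b - a) * k = ∫ _ in a..b, k := by rw [intervalIntegral.integral_const, smul_eq_mul]
    _ ≤ ∫ t in a..b, f t :=
      intervalIntegral.integral_mono_on hab intervalIntegrable_const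
        (hf.mono_set (by
          rw [uIcc_of_le hab, uIcc_of_le (hca.trans (hab.trans hbd))]
          exact Icc_subset_Icc hca hbd)) hk
    _ ≤ ∫ t in c..d, f t :=
      intervalIntegral.integral_mono_interval hca hab hbd (ae_of_all _ hf_nonneg) hf

theorem exists_Icc_div_four_le_norm_add_smul {V : Type*} [SeminormedAddCommGroup V]
    [NormedSpace ℝ V] (x y : V) :
    ∃ a ∈ Icc (0 : ℝ) (3 / 4), ∀ t ∈ Icc a (a + 1 / 4), ‖y‖ / 4 ≤ ‖x + t • y‖ := by
  have hdist : ∀ t : ℝ, 0 ≤ t → |‖x‖ - t * ‖y‖| ≤ ‖x + t • y‖ := fun t ht => by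
    simpa [norm_smul, abs_of_nonneg ht] using abs_norm_sub_norm_le x (-(t • y))
  rcases le_or_gt ‖x‖ (‖y‖ / 2) with hx | hx
  · refine ⟨3 / 4, by norm_num, fun t ⟨ht₀, ht₁⟩ => ?_⟩
    have := hdist t (by linarith)
    nlinarith [neg_abs_le (‖x‖ - t * ‖y‖), norm_nonneg y]
  · refine ⟨0, by norm_num, fun t ⟨ht₀, ht₁⟩ => ?_⟩
    have := hdist t ht₀
    nlinarith [le_abs_self (‖x‖ - t * ‖y‖), norm_nonneg y]

theorem stmt0_general (V : Type*) [NormedAddCommGroup V] [NormedSpace ℝ V]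
    (m : ℕ) :
    ∃ C > 0, ∀ x y : V, C * ‖y‖ ^ m ≤ ∫ t in (0:ℝ)..1, ‖x + t • y‖ ^ m := by
  refine ⟨(1 / 4) ^ (m + 1), by positivity, fun x y => ?_⟩
  obtain ⟨a, ⟨ha₀, ha₁⟩, ha⟩ := exists_Icc_div_four_le_norm_add_smul x y
  have hcont : Continuous fun t : ℝ => ‖x + t • y‖ ^ m := by fun_prop
  calc (1 / 4) ^ (m + 1) * ‖y‖ ^ m = (a + 1 / 4 - a) * (‖y‖ / 4) ^ m := by ring
    _ ≤ ∫ t in (0:ℝ)..1, ‖x + t • y‖ ^ m :=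
      mul_le_intervalIntegral_of_le_on_Icc ha₀ (by linarith) (by linarith)
        (fun t => by positivity) (hcont.intervalIntegrable 0 1)
        (fun t ht => pow_le_pow_left₀ (by positivity) (ha t ht) m)

/-- For a finite-dimensional real normed vector space `V` and a positive integer `m`,
there is a constant `C > 0` such that `∫₀¹ ‖x + t • y‖^m dt ≥ C ‖y‖^m` for all `x y : V`. -/
theorem stmt0 (V : Type*) [NormedAddCommGroup V] [NormedSpace ℝ V]
    [FiniteDimensional ℝ V] (m : ℕ) (hm : 1 ≤ m) :
    ∃ C > 0, ∀ x y : V, C * ‖y‖ ^ m ≤ ∫ t in (0:ℝ)..1, ‖x + t • y‖ ^ m :=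
  stmt0_general V m
end

section
/- Let a = d e^α denote the derivative of e^α(v) = (1/2)(1+|v|²)^α, i.e. de^α_v(w) = α(1+|v|²)^{α−1}⟨v,w⟩. Then for all a, b in a finite-dimensional inner product space V there exists a constant C > 0 (depending only on V and α) such that (de^α_a − de^α_b)(a − b) ≥ C |a − b|^{2α}. -/
/-!
Write `A = 1 + ‖a‖²`, `B = 1 + ‖b‖²` and `β = α - 1`. Polarisation gives
`A^β ⟪a, a - b⟫ - B^β ⟪b, a - b⟫ = ((A^β + B^β) ‖a - b‖² + (A^β - B^β)(A - B)) / 2`,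
whose second term is nonnegative because `t ↦ t^β` is monotone. For the first term,
`‖a - b‖² ≤ 4 max A B` gives `‖a - b‖^(2β) ≤ 4^β (A^β + B^β)`, so the first term alone is at
least `‖a - b‖^(2α) / (2 · 4^β)`.
-/

open Real

theorem rpow_sub_rpow_mul_sub_nonneg {x y β : ℝ} (hx : 0 ≤ x) (hy : 0 ≤ y) (hβ : 0 ≤ β) :
    0 ≤ (x ^ β - y ^ β) * (x - y) := by
  rcases le_total x y with h | h
  · exact mul_nonneg_of_nonpos_of_nonpos (sub_nonpos.mpr (rpow_le_rpow hx h hβ))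
      (sub_nonpos.mpr h)
  · exact mul_nonneg (sub_nonneg.mpr (rpow_le_rpow hy h hβ)) (sub_nonneg.mpr h)

theorem rpow_le_four_rpow_mul_rpow_add_rpow {d x y β : ℝ} (hd : 0 ≤ d) (hx : 0 ≤ x) (hy : 0 ≤ y)
    (hβ : 0 ≤ β) (h : d ≤ 4 * max x y) : d ^ β ≤ 4 ^ β * (x ^ β + y ^ β) := by
  have hmax : max x y ^ β ≤ x ^ β + y ^ β := by
    rcases max_cases x y with ⟨h, -⟩ | ⟨h, -⟩ <;> rw [h]
    · exact le_add_of_nonneg_right (rpow_nonneg hy β)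
    · exact le_add_of_nonneg_left (rpow_nonneg hx β)
  calc d ^ β ≤ (4 * max x y) ^ β := rpow_le_rpow hd h hβ
    _ = 4 ^ β * max x y ^ β := mul_rpow (by norm_num) (le_max_of_le_left hx)
    _ ≤ 4 ^ β * (x ^ β + y ^ β) := by gcongr

theorem norm_sub_sq_le_four_mul_max {E : Type*} [SeminormedAddCommGroup E] (a b : E) :
    ‖a - b‖ ^ 2 ≤ 4 * max (1 + ‖a‖ ^ 2) (1 + ‖b‖ ^ 2) := by
  have := norm_sub_le a b
  nlinarith [norm_nonneg (a - b), le_max_left (1 + ‖a‖ ^ 2) (1 + ‖b‖ ^ 2),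
    le_max_right (1 + ‖a‖ ^ 2) (1 + ‖b‖ ^ 2), sq_nonneg (‖a‖ - ‖b‖)]

theorem mul_inner_sub_sub_mul_inner_sub {V : Type*} [NormedAddCommGroup V]
    [InnerProductSpace ℝ V] (x y : ℝ) (a b : V) :
    x * inner ℝ a (a - b) - y * inner ℝ b (a - b)
      = ((x + y) * ‖a - b‖ ^ 2 + (x - y) * (‖a‖ ^ 2 - ‖b‖ ^ 2)) / 2 := by
  rw [inner_sub_right, inner_sub_right, real_inner_self_eq_norm_sq, real_inner_self_eq_norm_sq,
    real_inner_comm a b, norm_sub_sq_real]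
  ring

theorem norm_sub_rpow_two_mul_le {E : Type*} [SeminormedAddCommGroup E] (a b : E) {α : ℝ}
    (hα : 1 ≤ α) :
    ‖a - b‖ ^ (2 * α)
      ≤ 4 ^ (α - 1) * (‖a - b‖ ^ 2 * ((1 + ‖a‖ ^ 2) ^ (α - 1) + (1 + ‖b‖ ^ 2) ^ (α - 1))) := by
  have hd : 0 ≤ ‖a - b‖ ^ 2 := by positivity
  have hsplit : ‖a - b‖ ^ (2 * α) = ‖a - b‖ ^ 2 * (‖a - b‖ ^ 2) ^ (α - 1) := by
    rw [rpow_mul (norm_nonneg _), rpow_two, ← rpow_one_add' hd (by linarith)]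
    ring_nf
  rw [hsplit, mul_left_comm]
  gcongr
  exact rpow_le_four_rpow_mul_rpow_add_rpow hd (by positivity) (by positivity)
    (by linarith) (norm_sub_sq_le_four_mul_max a b)

theorem stmt3_general {V : Type*} [NormedAddCommGroup V] [InnerProductSpace ℝ V]
    (α : ℝ) (hα : 1 ≤ α) :
    ∃ C > 0, ∀ a b : V,
      C * ‖a - b‖ ^ (2 * α)
        ≤ α * (1 + ‖a‖ ^ 2) ^ (α - 1) * (inner ℝ a (a - b) : ℝ)
          - α * (1 + ‖b‖ ^ 2) ^ (α - 1) * (inner ℝ b (a - b) : ℝ) := by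
  refine ⟨α / (2 * 4 ^ (α - 1)), by positivity, fun a b => ?_⟩
  set X := (1 + ‖a‖ ^ 2) ^ (α - 1)
  set Y := (1 + ‖b‖ ^ 2) ^ (α - 1)
  have hmono : 0 ≤ (X - Y) * (‖a‖ ^ 2 - ‖b‖ ^ 2) := by
    have := rpow_sub_rpow_mul_sub_nonneg (x := 1 + ‖a‖ ^ 2) (y := 1 + ‖b‖ ^ 2)
      (by positivity) (by positivity) (sub_nonneg.mpr hα)
    rwa [add_sub_add_left_eq_sub] at this
  calc α / (2 * 4 ^ (α - 1)) * ‖a - b‖ ^ (2 * α)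
      ≤ α / (2 * 4 ^ (α - 1)) * (4 ^ (α - 1) * (‖a - b‖ ^ 2 * (X + Y))) := by
        gcongr; exact norm_sub_rpow_two_mul_le a b hα
    _ = α / 2 * ((X + Y) * ‖a - b‖ ^ 2) := by field_simp
    _ ≤ α / 2 * ((X + Y) * ‖a - b‖ ^ 2 + (X - Y) * (‖a‖ ^ 2 - ‖b‖ ^ 2)) := by
        gcongr; linarith
    _ = _ := by linear_combination (-α) * mul_inner_sub_sub_mul_inner_sub X Y a b

/-- Uniform monotonicity of the differential of `e^α`, where
`de^α_v(w) = α (1+|v|²)^{α-1} ⟨v, w⟩`. -/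
theorem stmt3 {V : Type*} [NormedAddCommGroup V] [InnerProductSpace ℝ V]
    [FiniteDimensional ℝ V] (α : ℝ) (hα : 1 ≤ α) :
    ∃ C > 0, ∀ a b : V,
      C * ‖a - b‖ ^ (2 * α)
        ≤ α * (1 + ‖a‖ ^ 2) ^ (α - 1) * (inner ℝ a (a - b) : ℝ)
          - α * (1 + ‖b‖ ^ 2) ^ (α - 1) * (inner ℝ b (a - b) : ℝ) :=
  stmt3_general α hα
end

section
/- Let 1 < α ≤ 2 and set s₀ = 4α/(α+2). Then 4/3 < s₀ ≤ 2, and with r₀ = 2s₀/(2−s₀) (for α < 2) one has r₀ = 4α/(2−α) > 4. Moreover the iteration r_{k+1} = 4α r_k / (4α + 2r_k − 2α r_k), starting from r₀ > 4 with α > 1, reaches a value r_k ≥ 2α/(α−1) after finitely many steps. -/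
/-- Bootstrap exponent arithmetic: for `1 < α < 2`, `s₀ = 4α/(α+2)` satisfies
`4/3 < s₀ ≤ 2`, `r₀ = 2s₀/(2−s₀) = 4α/(2−α) > 4`, and the bootstrap iteration
reaches `2α/(α−1)` in finitely many steps. -/
theorem stmt15 (α : ℝ) (hα1 : 1 < α) (hα2 : α < 2) :
    (4 / 3 < 4 * α / (α + 2) ∧ 4 * α / (α + 2) ≤ 2) ∧
    (2 * (4 * α / (α + 2)) / (2 - 4 * α / (α + 2)) = 4 * α / (2 - α) ∧
      4 < 4 * α / (2 - α)) ∧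
    ∀ r : ℕ → ℝ, r 0 = 4 * α / (2 - α) →
      (∀ k, r (k + 1) = 4 * α * r k / (4 * α + 2 * r k - 2 * α * r k)) →
      ∃ k, 2 * α / (α - 1) ≤ r k := by
  classical
  have hα0 : (0:ℝ) < α := by linarith
  have hp2 : (0:ℝ) < α + 2 := by linarith
  have h2α : (0:ℝ) < 2 - α := by linarith
  have hα1' : (0:ℝ) < α - 1 := by linarith
  refine ⟨⟨?_, ?_⟩, ⟨?_, ?_⟩, ?_⟩
  · rw [div_lt_div_iff₀ (by norm_num) hp2]; nlinarith
  · rw [div_le_iff₀ hp2]; nlinarith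
  · have hne : (2:ℝ) - 4 * α / (α + 2) = (4 - 2*α)/(α+2) := by
      field_simp; ring
    have l : 2*(4*α/(α+2)) = 8*α/(α+2) := by ring
    rw [hne, l, div_div_div_comm, div_self (ne_of_gt hp2), div_one,
      div_eq_div_iff (ne_of_gt (by linarith : (0:ℝ) < 4 - 2*α)) (ne_of_gt h2α)]
    ring
  · rw [lt_div_iff₀ h2α]; nlinarith
  · intro r hr0 hrec
    set d : ℝ := (α - 1)/(2*α) with hd_def
    set c : ℝ := (2 - α)/(4*α) with hc_def
    have hd : 0 < d := div_pos hα1' (by linarith)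
    have key : ∀ k : ℕ, (∀ j : ℕ, j < k → d < c - (j:ℝ)*d) → 0 < r k ∧ 1/(r k) = c - (k:ℝ)*d := by
      intro k
      induction k with
      | zero =>
        intro _
        refine ⟨by rw [hr0]; positivity, ?_⟩
        rw [hr0, hc_def, one_div_div]; push_cast; ring_nf
      | succ k ih =>
        intro H
        obtain ⟨hpos, hinv⟩ := ih (fun j hj => H j (Nat.lt_succ_of_lt hj))
        have hdk : d < c - (k:ℝ)*d := H k (Nat.lt_succ_self k)
        have hrk : d < 1/(r k) := by rw [hinv]; exact hdk
        have hrne : r k ≠ 0 := ne_of_gt hpos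
        have hαne : α ≠ 0 := ne_of_gt hα0
        have hD : 4 * α + 2 * r k - 2 * α * r k = 4*α*(r k)*(1/(r k) - d) := by
          rw [hd_def]; field_simp; ring
        have hDpos : 0 < 4 * α + 2 * r k - 2 * α * r k := by
          rw [hD]; apply mul_pos (by positivity); linarith
        have hr1 : r (k+1) = 4 * α * r k / (4 * α + 2 * r k - 2 * α * r k) :=
          hrec k
        refine ⟨by rw [hr1]; positivity, ?_⟩
        rw [hr1, hD, one_div_div,
          mul_div_cancel_left₀ _ (by positivity : (4*α*(r k)) ≠ 0), hinv]
        push_cast; ring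
    obtain ⟨n, hn⟩ := exists_nat_gt ((c - d)/d)
    have hex : ∃ k : ℕ, c - (k:ℝ)*d ≤ d := by
      refine ⟨n, ?_⟩
      rw [div_lt_iff₀ hd] at hn
      nlinarith
    set k := Nat.find hex with hk
    have hk1 : c - (k:ℝ)*d ≤ d := Nat.find_spec hex
    have hk2 : ∀ j : ℕ, j < k → d < c - (j:ℝ)*d := by
      intro j hj
      have := Nat.find_min hex hj
      push_neg at this
      linarith
    obtain ⟨hpos, hinv⟩ := key k hk2
    refine ⟨k, ?_⟩
    have hrk : 1/(r k) ≤ d := by rw [hinv]; exact hk1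
    have h1 : 1 ≤ d * r k := by
      rw [div_le_iff₀ hpos] at hrk; linarith
    rw [div_le_iff₀ hα1']
    have h2α0 : (0:ℝ) < 2*α := by linarith
    rw [hd_def, div_mul_eq_mul_div, le_div_iff₀ h2α0] at h1
    nlinarith
end
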